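/- arXiv:1812.05381 — 9 statements merged into one kernel-verified Lean document; each statement's English description precedes it below -/
import Mathlib

section
/- Let n ≥ 1 and let p_1,...,p_n ∈ [0,1] with associated values V_1,...,V_n defined by the backward recurrence. If 1 ≤ r ≤ n, p_r > 1/2, and p_k < 1/2 for every k with r+1 ≤ k ≤ n, then V_1 = V_2 = ... = V_r and V_r > 1/2. -/
/-!
For `v < 1/2` the recurrence reads `v ↦ v + q (1 - 2v)`, which keeps the value below `1/2`
when `q < 1/2` and lifts it above `1/2` when `q > 1/2`. Hence `V k < 1/2` for `r < k ≤ n` and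
`V r > 1/2`. A value `v ≥ 1/2` is a fixed point of every backward step, so `V r` propagates
unchanged down to `V 1`.
-/

def lspStep (q v : ℝ) : ℝ := q * max v (1 - v) + (1 - q) * v

lemma lspStep_of_lt_half {q v : ℝ} (hv : v < 1 / 2) : lspStep q v = v + q * (1 - 2 * v) := by
  rw [lspStep, max_eq_right (by linarith)]
  ring

lemma lspStep_of_half_le (q : ℝ) {v : ℝ} (hv : 1 / 2 ≤ v) : lspStep q v = v := by
  rw [lspStep, max_eq_left (by linarith)]
  ring

lemma lspStep_lt_half {q v : ℝ} (hq : q < 1 / 2) (hv : v < 1 / 2) : lspStep q v < 1 / 2 := by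
  rw [lspStep_of_lt_half hv]
  nlinarith

lemma half_lt_lspStep {q v : ℝ} (hq : 1 / 2 < q) (hv : v < 1 / 2) : 1 / 2 < lspStep q v := by
  rw [lspStep_of_lt_half hv]
  nlinarith

section Recurrence

variable {m n : ℕ} {p V : ℕ → ℝ}

lemma value_lt_half_of_prob_lt_half (hVn : V n = p n)
    (hV : ∀ k, m ≤ k → k < n → V k = lspStep (p k) (V (k + 1)))
    (hp : ∀ k, m ≤ k → k ≤ n → p k < 1 / 2) {k : ℕ} (hmk : m ≤ k) (hkn : k ≤ n) :
    V k < 1 / 2 := by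
  induction hkn using Nat.decreasingInduction with
  | self => exact hVn ▸ hp n hmk le_rfl
  | of_succ k hkn ih =>
    rw [hV k hmk hkn]
    exact lspStep_lt_half (hp k hmk hkn.le) (ih (by omega))

lemma value_eq_of_half_le (hV : ∀ k, m ≤ k → k < n → V k = lspStep (p k) (V (k + 1)))
    (hVn : 1 / 2 ≤ V n) {k : ℕ} (hmk : m ≤ k) (hkn : k ≤ n) : V k = V n := by
  induction hkn using Nat.decreasingInduction with
  | self => rfl
  | of_succ k hkn ih =>
    rw [hV k hmk hkn, ih (by omega), lspStep_of_half_le _ hVn]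

end Recurrence

theorem adversarial_LSP_value_above_half_general
    (n : ℕ) (p V : ℕ → ℝ)
    (hVn : V n = p n)
    (hV : ∀ k, 1 ≤ k → k < n →
      V k = p k * max (V (k + 1)) (1 - V (k + 1)) + (1 - p k) * V (k + 1))
    (r : ℕ) (hr : 1 ≤ r) (hrn : r ≤ n)
    (hpr : 1 / 2 < p r)
    (hsmall : ∀ k, r + 1 ≤ k → k ≤ n → p k < 1 / 2) :
    (∀ k, 1 ≤ k → k ≤ r → V k = V r) ∧ 1 / 2 < V r := by
  have hVr : 1 / 2 < V r := by
    rcases hrn.eq_or_lt with rfl | hrn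
    · exact hVn ▸ hpr
    · have hVr1 : V (r + 1) < 1 / 2 :=
        value_lt_half_of_prob_lt_half hVn (fun k hk hkn => hV k (by omega) hkn) hsmall
          le_rfl hrn
      exact hV r hr hrn ▸ half_lt_lspStep hpr hVr1
  refine ⟨fun k hk hkr => ?_, hVr⟩
  exact value_eq_of_half_le (fun j hj hjr => hV j hj (by omega)) hVr.le hk hkr

/-- If `p r > 1/2` and `p k < 1/2` for all `r+1 ≤ k ≤ n`, then
`V 1 = V 2 = … = V r` and `V r > 1/2`. -/
theorem adversarial_LSP_value_above_half
    (n : ℕ) (hn : 1 ≤ n) (p V : ℕ → ℝ)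
    (hp : ∀ k, 1 ≤ k → k ≤ n → p k ∈ Set.Icc (0 : ℝ) 1)
    (hVn : V n = p n)
    (hV : ∀ k, 1 ≤ k → k < n →
      V k = p k * max (V (k + 1)) (1 - V (k + 1)) + (1 - p k) * V (k + 1))
    (r : ℕ) (hr : 1 ≤ r) (hrn : r ≤ n)
    (hpr : 1 / 2 < p r)
    (hsmall : ∀ k, r + 1 ≤ k → k ≤ n → p k < 1 / 2) :
    (∀ k, 1 ≤ k → k ≤ r → V k = V r) ∧ 1 / 2 < V r :=
  adversarial_LSP_value_above_half_general n p V hVn hV r hr hrn hpr hsmall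
end

section
/- Let n ≥ 1, let p_1,...,p_n ∈ [0,1] with associated values V_1,...,V_n defined by the backward recurrence, fix r with 1 ≤ r ≤ n, and let Ω_r = {k : r ≤ k ≤ n and p_k ≥ 1/2}. Then: (i) if Ω_r = ∅, then V_r < 1/2; (ii) if Ω_r ≠ ∅ and u = max Ω_r satisfies p_u = 1/2, then V_r = 1/2; (iii) if Ω_r ≠ ∅ and u = max Ω_r satisfies p_u > 1/2, then V_r > 1/2. -/
/-!
Going backwards, `V k - 1/2 = (1 - 2 p k) (V (k+1) - 1/2)` while `V (k+1) ≤ 1/2`, and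
`V k = V (k+1)` once `V (k+1) ≥ 1/2`. Hence `V` stays below `1/2` as long as all `p k < 1/2`;
at the last index `u` with `p u ≥ 1/2` the value `V u - 1/2` becomes a positive multiple of
`p u - 1/2`, and from there on (down to `r`) `V` is frozen at `V u`.
-/

section AdversarialLSP

variable {n : ℕ} {p V : ℕ → ℝ}

lemma mul_max_add_eq_of_half_le {q W : ℝ} (hW : 1 / 2 ≤ W) :
    q * max W (1 - W) + (1 - q) * W = W := by
  rw [max_eq_left (by linarith)]
  ring

lemma mul_max_add_sub_half_of_le_half {q W : ℝ} (hW : W ≤ 1 / 2) :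
    q * max W (1 - W) + (1 - q) * W - 1 / 2 = (1 - 2 * q) * (W - 1 / 2) := by
  rw [max_eq_right (by linarith)]
  ring

lemma value_lt_half_of_forall_lt_half (hVn : V n = p n)
    (hV : ∀ k, 1 ≤ k → k < n →
      V k = p k * max (V (k + 1)) (1 - V (k + 1)) + (1 - p k) * V (k + 1))
    {r : ℕ} (hr : 1 ≤ r) (hrn : r ≤ n) (hp : ∀ k, r ≤ k → k ≤ n → p k < 1 / 2) :
    V r < 1 / 2 := by
  induction hrn using Nat.decreasingInduction with
  | self => exact hVn ▸ hp n le_rfl le_rfl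
  | of_succ k hkn ih =>
    have hW : V (k + 1) < 1 / 2 :=
      ih (by omega) fun j hkj hjn => hp j (by omega) hjn
    have hstep := mul_max_add_sub_half_of_le_half (q := p k) hW.le
    rw [← hV k hr hkn] at hstep
    have hpk := hp k le_rfl hkn.le
    linarith [mul_neg_of_pos_of_neg (by linarith : 0 < 1 - 2 * p k)
      (by linarith : V (k + 1) - 1 / 2 < 0)]

lemma value_eq_of_half_le_value
    (hV : ∀ k, 1 ≤ k → k < n →
      V k = p k * max (V (k + 1)) (1 - V (k + 1)) + (1 - p k) * V (k + 1))
    {r u : ℕ} (hr : 1 ≤ r) (hru : r ≤ u) (hun : u ≤ n) (hVu : 1 / 2 ≤ V u) :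
    V r = V u := by
  induction hru using Nat.decreasingInduction with
  | self => rfl
  | of_succ k hku ih =>
    rw [hV k hr (by omega), ih (by omega), mul_max_add_eq_of_half_le hVu]

lemma exists_pos_mul_of_forall_lt_half_above (hVn : V n = p n)
    (hV : ∀ k, 1 ≤ k → k < n →
      V k = p k * max (V (k + 1)) (1 - V (k + 1)) + (1 - p k) * V (k + 1))
    {u : ℕ} (hu : 1 ≤ u) (hun : u ≤ n) (hp : ∀ k, u < k → k ≤ n → p k < 1 / 2) :
    ∃ c : ℝ, 0 < c ∧ V u - 1 / 2 = c * (p u - 1 / 2) := by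
  rcases hun.eq_or_lt with rfl | hun
  · exact ⟨1, one_pos, by rw [hVn, one_mul]⟩
  · have hW : V (u + 1) < 1 / 2 :=
      value_lt_half_of_forall_lt_half hVn hV (by omega) hun hp
    refine ⟨1 - 2 * V (u + 1), by linarith, ?_⟩
    rw [hV u hu hun, mul_max_add_sub_half_of_le_half hW.le]
    ring

end AdversarialLSP

theorem adversarial_LSP_value_vs_half_general
    (n : ℕ) (p V : ℕ → ℝ)
    (hVn : V n = p n)
    (hV : ∀ k, 1 ≤ k → k < n →
      V k = p k * max (V (k + 1)) (1 - V (k + 1)) + (1 - p k) * V (k + 1))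
    (r : ℕ) (hr : 1 ≤ r) (hrn : r ≤ n)
    (Ω : Finset ℕ) (hΩ : Ω = (Finset.Icc r n).filter (fun k => 1 / 2 ≤ p k)) :
    (Ω = ∅ → V r < 1 / 2) ∧
      (∀ h : Ω.Nonempty,
        (p (Ω.max' h) = 1 / 2 → V r = 1 / 2) ∧
        (1 / 2 < p (Ω.max' h) → 1 / 2 < V r)) := by
  subst hΩ
  refine ⟨fun hempty => ?_, fun hne => ?_⟩
  · refine value_lt_half_of_forall_lt_half hVn hV hr hrn fun k hrk hkn => ?_
    simpa using Finset.filter_eq_empty_iff.mp hempty (Finset.mem_Icc.mpr ⟨hrk, hkn⟩)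
  · set u := ((Finset.Icc r n).filter (fun k => 1 / 2 ≤ p k)).max' hne
    obtain ⟨hu, hpu⟩ := Finset.mem_filter.mp (Finset.max'_mem _ hne)
    obtain ⟨hru, hun⟩ := Finset.mem_Icc.mp hu
    have habove : ∀ k, u < k → k ≤ n → p k < 1 / 2 := fun k huk hkn =>
      lt_of_not_ge fun hpk => (Finset.le_max' _ k
        (Finset.mem_filter.mpr ⟨Finset.mem_Icc.mpr ⟨by omega, hkn⟩, hpk⟩)).not_gt huk
    obtain ⟨c, hc, hVu⟩ :=
      exists_pos_mul_of_forall_lt_half_above hVn hV (hr.trans hru) hun habove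
    have hVu_ge : 1 / 2 ≤ V u := by linarith [mul_nonneg hc.le (sub_nonneg.mpr hpu)]
    have hVr : V r = V u := value_eq_of_half_le_value hV hr hru hun hVu_ge
    rw [hVr]
    refine ⟨fun h => ?_, fun h => ?_⟩
    · rw [h, sub_self, mul_zero] at hVu
      linarith
    · linarith [mul_pos hc (sub_pos.mpr h)]

/-- Let `Ω_r = {k ∈ [r,n] : p k ≥ 1/2}`. Then: (i) if `Ω_r = ∅`,
then `V r < 1/2`; (ii) if `Ω_r ≠ ∅` and its maximum `u` satisfies `p u = 1/2`,
then `V r = 1/2`; (iii) if `Ω_r ≠ ∅` and its maximum `u` satisfies `p u > 1/2`,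
then `V r > 1/2`. -/
theorem adversarial_LSP_value_vs_half
    (n : ℕ) (hn : 1 ≤ n) (p V : ℕ → ℝ)
    (hp : ∀ k, 1 ≤ k → k ≤ n → p k ∈ Set.Icc (0 : ℝ) 1)
    (hVn : V n = p n)
    (hV : ∀ k, 1 ≤ k → k < n →
      V k = p k * max (V (k + 1)) (1 - V (k + 1)) + (1 - p k) * V (k + 1))
    (r : ℕ) (hr : 1 ≤ r) (hrn : r ≤ n)
    (Ω : Finset ℕ) (hΩ : Ω = (Finset.Icc r n).filter (fun k => 1 / 2 ≤ p k)) :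
    (Ω = ∅ → V r < 1 / 2) ∧
      (∀ h : Ω.Nonempty,
        (p (Ω.max' h) = 1 / 2 → V r = 1 / 2) ∧
        (1 / 2 < p (Ω.max' h) → 1 / 2 < V r)) :=
  adversarial_LSP_value_vs_half_general n p V hVn hV r hr hrn Ω hΩ
end

section
/- Let n ≥ 1 and let p_1,...,p_n ∈ [0,1] with associated values V_1,...,V_n defined by the backward recurrence. If 1 ≤ r ≤ n and p_k < 1/2 for every k with r+1 ≤ k ≤ n (no assumption on p_r), then V_r = (1 − ∏_{i=r}^{n} (1 − 2 p_i)) / 2. In particular, when p_k < 1/2 for all k ∈ [r,n], V_r equals the probability that the number of successes among trials r,...,n is odd. -/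
/-! While every later success probability is below `1/2`, the value `V (k+1)` stays at most
`1/2`, so the adversary always switches at a success and the recurrence becomes the linear
`V k = p k * (1 - V (k+1)) + (1 - p k) * V (k+1)`, i.e. `1 - 2 V k = (1 - 2 p k) (1 - 2 V (k+1))`.
Unrolled, this is the product formula; expanding `∏ (1 - 2 p i) = ∏ ((1 - p i) - p i)` over
subsets gives the parity probability. -/

open Finset

theorem prod_one_sub_two_mul_eq_one_sub_two_mul_sum_odd {ι R : Type*} [CommRing R]
    [DecidableEq ι] (s : Finset ι) (p : ι → R) :
    ∏ i ∈ s, (1 - 2 * p i) =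
      1 - 2 * ∑ S ∈ s.powerset.filter (fun S => Odd S.card),
        (∏ i ∈ S, p i) * ∏ i ∈ s \ S, (1 - p i) := by
  set w : Finset ι → R := fun S => (∏ i ∈ S, p i) * ∏ i ∈ s \ S, (1 - p i)
  have total : ∑ S ∈ s.powerset, w S = 1 := by
    simp only [w, ← prod_add, add_sub_cancel, prod_const_one]
  have signed : ∏ i ∈ s, (1 - 2 * p i) = ∑ S ∈ s.powerset, (-1) ^ S.card * w S := by
    rw [show ∏ i ∈ s, (1 - 2 * p i) = ∏ i ∈ s, (-p i + (1 - p i)) from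
      prod_congr rfl fun i _ => by ring, prod_add]
    refine sum_congr rfl fun S _ => ?_
    simp only [w, prod_neg, mul_assoc]
  have sign_eq (S : Finset ι) :
      (-1 : R) ^ S.card * w S = w S - 2 * if Odd S.card then w S else 0 := by
    rcases Nat.even_or_odd S.card with h | h
    · simp [h.neg_one_pow, Nat.not_odd_iff_even.mpr h]
    · simp only [h.neg_one_pow, h, if_true]; ring
  rw [signed, sum_congr rfl fun S _ => sign_eq S, sum_sub_distrib, ← mul_sum, ← sum_filter,
    total]

theorem mul_max_add_one_sub_mul_half_one_sub (a q : ℝ) (hq : 0 ≤ q) :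
    a * max ((1 - q) / 2) (1 - (1 - q) / 2) + (1 - a) * ((1 - q) / 2) =
      (1 - (1 - 2 * a) * q) / 2 := by
  rw [max_eq_right (by linarith)]
  ring

theorem value_eq_half_one_sub_prod (n : ℕ) (p V : ℕ → ℝ) (hVn : V n = p n)
    (hV : ∀ k, 1 ≤ k → k < n →
      V k = p k * max (V (k + 1)) (1 - V (k + 1)) + (1 - p k) * V (k + 1))
    (r : ℕ) (hr : 1 ≤ r) (hrn : r ≤ n)
    (hsmall : ∀ k, r + 1 ≤ k → k ≤ n → p k < 1 / 2) :
    V r = (1 - ∏ i ∈ Icc r n, (1 - 2 * p i)) / 2 := by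
  induction hrn using Nat.decreasingInduction with
  | self => simp [hVn]
  | of_succ k hkn ih =>
    have hprod : 0 ≤ ∏ i ∈ Icc (k + 1) n, (1 - 2 * p i) :=
      prod_nonneg fun i hi => by
        obtain ⟨hki, hin⟩ := mem_Icc.mp hi
        linarith [hsmall i hki hin]
    rw [hV k hr hkn, ih (by omega) (fun i hi => hsmall i (by omega)),
      mul_max_add_one_sub_mul_half_one_sub _ _ hprod, ← mul_prod_Ioc_eq_prod_Icc hkn.le,
      Icc_add_one_left_eq_Ioc]

theorem adversarial_LSP_value_product_formula_general
    (n : ℕ) (p V : ℕ → ℝ)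
    (hVn : V n = p n)
    (hV : ∀ k, 1 ≤ k → k < n →
      V k = p k * max (V (k + 1)) (1 - V (k + 1)) + (1 - p k) * V (k + 1))
    (r : ℕ) (hr : 1 ≤ r) (hrn : r ≤ n)
    (hsmall : ∀ k, r + 1 ≤ k → k ≤ n → p k < 1 / 2) :
    V r = (1 - ∏ i ∈ Finset.Icc r n, (1 - 2 * p i)) / 2 ∧
      ((∀ k, r ≤ k → k ≤ n → p k < 1 / 2) →
        V r = ∑ S ∈ (Finset.Icc r n).powerset.filter (fun S => Odd S.card),
          (∏ i ∈ S, p i) * ∏ i ∈ Finset.Icc r n \ S, (1 - p i)) := by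
  have hVr := value_eq_half_one_sub_prod n p V hVn hV r hr hrn hsmall
  refine ⟨hVr, fun _ => ?_⟩
  rw [hVr, prod_one_sub_two_mul_eq_one_sub_two_mul_sum_odd]
  ring

/-- If `p k < 1/2` for every `r+1 ≤ k ≤ n` (no assumption on `p r`),
then `V r = (1 - ∏_{i=r}^{n} (1 - 2 p i)) / 2`; in particular, when moreover
`p k < 1/2` for all `k ∈ [r,n]`, `V r` equals the probability that the number of
successes among the independent trials `r, …, n` is odd. -/
theorem adversarial_LSP_value_product_formula
    (n : ℕ) (hn : 1 ≤ n) (p V : ℕ → ℝ)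
    (hp : ∀ k, 1 ≤ k → k ≤ n → p k ∈ Set.Icc (0 : ℝ) 1)
    (hVn : V n = p n)
    (hV : ∀ k, 1 ≤ k → k < n →
      V k = p k * max (V (k + 1)) (1 - V (k + 1)) + (1 - p k) * V (k + 1))
    (r : ℕ) (hr : 1 ≤ r) (hrn : r ≤ n)
    (hsmall : ∀ k, r + 1 ≤ k → k ≤ n → p k < 1 / 2) :
    V r = (1 - ∏ i ∈ Finset.Icc r n, (1 - 2 * p i)) / 2 ∧
      ((∀ k, r ≤ k → k ≤ n → p k < 1 / 2) →
        V r = ∑ S ∈ (Finset.Icc r n).powerset.filter (fun S => Odd S.card),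
          (∏ i ∈ S, p i) * ∏ i ∈ Finset.Icc r n \ S, (1 - p i)) :=
  adversarial_LSP_value_product_formula_general n p V hVn hV r hr hrn hsmall
end

section
/- Let n ≥ 1 and let p_1,...,p_n ∈ [0,1) with associated values V_1,...,V_n defined by the backward recurrence. If the sum of odds satisfies ∑_{i=1}^{n} p_i/(1 − p_i) ≥ 1, then V_1 > 1/e. -/
/-!
Write `D k = 1 - 2 V k`. The recurrence reads `D k = D (k+1) - 2 p k · max (D (k+1)) 0`, so `D k`
is multiplied by `1 - 2 p k` while it is nonnegative and frozen once it is negative. Hence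
`D 1 ≤ ∏ max (1 - 2 p i) 0`, and with `r = p/(1-p)` the elementary bound
`1 - 2p = (1 - r)/(1 + r) ≤ exp (-(3/2) r)` turns the odds condition into `D 1 ≤ exp (-3/2)`.
It remains to check numerically that `(1 - exp (-3/2)) / 2 > 1/e`.
-/

open Finset Real

lemma one_sub_div_one_add_le_exp {r : ℝ} (h0 : 0 ≤ r) (h1 : r ≤ 1) :
    (1 - r) / (1 + r) ≤ exp (-(3 / 2) * r) := by
  have hinv : (1 + r)⁻¹ ≤ exp (-(r / 2)) := by
    have hlog : r / 2 ≤ log (1 + r) := by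
      have := one_sub_inv_le_log_of_pos (x := 1 + r) (by linarith)
      have : r / 2 ≤ 1 - (1 + r)⁻¹ := by
        rw [le_sub_iff_add_le, ← le_sub_iff_add_le', inv_le_iff_one_le_mul₀ (by linarith)]
        nlinarith
      linarith
    rw [exp_neg, inv_le_inv₀ (by linarith) (exp_pos _)]
    calc exp (r / 2) ≤ exp (log (1 + r)) := exp_le_exp.mpr hlog
      _ = 1 + r := exp_log (by linarith)
  calc (1 - r) / (1 + r) = (1 - r) * (1 + r)⁻¹ := div_eq_mul_inv _ _
    _ ≤ exp (-r) * exp (-(r / 2)) :=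
        mul_le_mul (one_sub_le_exp_neg r) hinv (by positivity) (exp_pos _).le
    _ = exp (-(3 / 2) * r) := by rw [← exp_add]; ring_nf

lemma max_one_sub_two_mul_le_exp_odds {q : ℝ} (hq : q ∈ Set.Ico (0 : ℝ) 1) :
    max (1 - 2 * q) 0 ≤ exp (-(3 / 2) * (q / (1 - q))) := by
  obtain ⟨h0, h1⟩ := hq
  rcases le_or_gt q (1 / 2) with hhalf | hhalf
  · have hpos : (0 : ℝ) < 1 - q := by linarith
    have hodds : (1 - q / (1 - q)) / (1 + q / (1 - q)) = 1 - 2 * q := by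
      field_simp; ring
    rw [max_eq_left (by linarith), ← hodds]
    exact one_sub_div_one_add_le_exp (div_nonneg h0 hpos.le) (by rw [div_le_one hpos]; linarith)
  · rw [max_eq_right (by linarith)]
    exact (exp_pos _).le

lemma prod_max_one_sub_two_mul_le_exp_sum_odds {ι : Type*} (s : Finset ι) (p : ι → ℝ)
    (hp : ∀ i ∈ s, p i ∈ Set.Ico (0 : ℝ) 1) :
    ∏ i ∈ s, max (1 - 2 * p i) 0 ≤ exp (-(3 / 2) * ∑ i ∈ s, p i / (1 - p i)) := by
  rw [mul_sum, exp_sum]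
  exact prod_le_prod (fun _ _ ↦ le_max_right _ _)
    (fun i hi ↦ max_one_sub_two_mul_le_exp_odds (hp i hi))

lemma one_sub_two_mul_recurrence_le (p v P : ℝ) (hv : 1 - 2 * v ≤ P) (hP : 0 ≤ P) :
    1 - 2 * (p * max v (1 - v) + (1 - p) * v) ≤ max (1 - 2 * p) 0 * P := by
  rcases le_or_gt v (1 - v) with hle | hlt
  · rw [max_eq_right hle]
    calc 1 - 2 * (p * (1 - v) + (1 - p) * v) = (1 - 2 * p) * (1 - 2 * v) := by ring
      _ ≤ max (1 - 2 * p) 0 * (1 - 2 * v) :=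
          mul_le_mul_of_nonneg_right (le_max_left _ _) (by linarith)
      _ ≤ max (1 - 2 * p) 0 * P := mul_le_mul_of_nonneg_left hv (le_max_right _ _)
  · rw [max_eq_left hlt.le]
    nlinarith [le_max_right (1 - 2 * p) 0]

lemma one_sub_two_mul_value_le_prod (n : ℕ) (p V : ℕ → ℝ) (hVn : V n = p n)
    (hV : ∀ k, 1 ≤ k → k < n →
      V k = p k * max (V (k + 1)) (1 - V (k + 1)) + (1 - p k) * V (k + 1))
    {k : ℕ} (hk : 1 ≤ k) (hkn : k ≤ n) :
    1 - 2 * V k ≤ ∏ i ∈ Icc k n, max (1 - 2 * p i) 0 := by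
  induction hkn using Nat.decreasingInduction with
  | self => rw [Icc_self, prod_singleton, hVn]; exact le_max_left _ _
  | of_succ k hkn ih =>
    rw [← insert_Icc_add_one_left_eq_Icc hkn.le, prod_insert (by simp), hV k hk hkn]
    exact one_sub_two_mul_recurrence_le _ _ _ (ih (by omega))
      (prod_nonneg fun _ _ ↦ le_max_right _ _)

lemma inv_exp_one_lt_one_sub_exp_neg_three_halves_div_two :
    1 / exp 1 < (1 - exp (-(3 / 2))) / 2 := by
  have he : (2.7182818283 : ℝ) < exp 1 := exp_one_gt_d9
  have hsqrt : exp (-(1 / 2)) ≤ 2 / 3 := by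
    rw [exp_neg, inv_le_comm₀ (exp_pos _) (by norm_num)]
    linarith [add_one_le_exp (1 / 2)]
  have hsplit : exp (-(3 / 2)) = (exp 1)⁻¹ * exp (-(1 / 2)) := by
    rw [← exp_neg, ← exp_add]; norm_num
  rw [hsplit, one_div, lt_div_iff₀ (by norm_num)]
  nlinarith [inv_pos.mpr (exp_pos 1), mul_inv_cancel₀ (exp_pos 1).ne']

/-- If `p i ∈ [0,1)` for all `i` and the sum of the odds satisfies
`∑_{i=1}^{n} p i / (1 - p i) ≥ 1`, then `V 1 > 1/e`. -/
theorem adversarial_LSP_value_gt_inv_e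
    (n : ℕ) (hn : 1 ≤ n) (p V : ℕ → ℝ)
    (hp : ∀ k, 1 ≤ k → k ≤ n → p k ∈ Set.Ico (0 : ℝ) 1)
    (hVn : V n = p n)
    (hV : ∀ k, 1 ≤ k → k < n →
      V k = p k * max (V (k + 1)) (1 - V (k + 1)) + (1 - p k) * V (k + 1))
    (hodds : 1 ≤ ∑ i ∈ Finset.Icc 1 n, p i / (1 - p i)) :
    1 / Real.exp 1 < V 1 := by
  have hD : 1 - 2 * V 1 ≤ exp (-(3 / 2)) :=
    calc 1 - 2 * V 1 ≤ ∏ i ∈ Icc 1 n, max (1 - 2 * p i) 0 :=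
          one_sub_two_mul_value_le_prod n p V hVn hV le_rfl hn
      _ ≤ exp (-(3 / 2) * ∑ i ∈ Icc 1 n, p i / (1 - p i)) :=
          prod_max_one_sub_two_mul_le_exp_sum_odds _ p
            fun i hi ↦ hp i (mem_Icc.mp hi).1 (mem_Icc.mp hi).2
      _ ≤ exp (-(3 / 2)) := exp_le_exp.mpr (by linarith)
  linarith [inv_exp_one_lt_one_sub_exp_neg_three_halves_div_two]
end

section
/- Let n ≥ 1, let p be a real number with 0 ≤ p ≤ 1/2, and let p_i = p for all i = 1,...,n, with associated values V_1,...,V_n defined by the backward recurrence. Then V_1 = (1 − (1 − 2p)^n)/2. -/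
/-!
Below `1/2` the maximum in the recurrence is always `1 - x`, so a step is the affine map
`x ↦ p + (1 - 2p) x`, which fixes `1/2` and multiplies the distance to `1/2` by `q = 1 - 2p ≥ 0`.
Hence the values stay below `1/2`, and from `V n = p = (1 - q) / 2` one gets
`V k = (1 - q ^ (n + 1 - k)) / 2`.
-/

lemma lsp_step_of_le_half (p x : ℝ) (hx : x ≤ 1 / 2) :
    p * max x (1 - x) + (1 - p) * x = p + (1 - 2 * p) * x := by
  rw [max_eq_right (by linarith)]
  ring

lemma lsp_step_closed_form (p : ℝ) (hp : p ≤ 1 / 2) (m : ℕ) :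
    p * max ((1 - (1 - 2 * p) ^ m) / 2) (1 - (1 - (1 - 2 * p) ^ m) / 2)
      + (1 - p) * ((1 - (1 - 2 * p) ^ m) / 2) = (1 - (1 - 2 * p) ^ (m + 1)) / 2 := by
  have hq : 0 ≤ (1 - 2 * p) ^ m := pow_nonneg (by linarith) m
  rw [lsp_step_of_le_half p _ (by linarith)]
  ring

lemma lsp_constant_parameter_value {n : ℕ} {p : ℝ} (hp : p ≤ 1 / 2) {V : ℕ → ℝ}
    (hVn : V n = p)
    (hV : ∀ k, 1 ≤ k → k < n →
      V k = p * max (V (k + 1)) (1 - V (k + 1)) + (1 - p) * V (k + 1))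
    {k : ℕ} (hk : k ≤ n) (hk1 : 1 ≤ k) :
    V k = (1 - (1 - 2 * p) ^ (n + 1 - k)) / 2 := by
  induction hk using Nat.decreasingInduction with
  | self => rw [hVn, Nat.add_sub_cancel_left, pow_one]; ring
  | of_succ k hkn ih =>
    rw [hV k hk1 hkn, ih (by omega), lsp_step_closed_form p hp]
    congr 3
    omega

theorem adversarial_LSP_constant_parameter_general
    (n : ℕ) (hn : 1 ≤ n) (p : ℝ) (hp1 : p ≤ 1 / 2)
    (V : ℕ → ℝ) (hVn : V n = p)
    (hV : ∀ k, 1 ≤ k → k < n →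
      V k = p * max (V (k + 1)) (1 - V (k + 1)) + (1 - p) * V (k + 1)) :
    V 1 = (1 - (1 - 2 * p) ^ n) / 2 := by
  simpa using lsp_constant_parameter_value hp1 hVn hV hn le_rfl

/-- If all parameters are equal to `p` with `0 ≤ p ≤ 1/2`, then
`V 1 = (1 - (1 - 2p)^n) / 2`. -/
theorem adversarial_LSP_constant_parameter
    (n : ℕ) (hn : 1 ≤ n) (p : ℝ) (hp0 : 0 ≤ p) (hp1 : p ≤ 1 / 2)
    (V : ℕ → ℝ) (hVn : V n = p)
    (hV : ∀ k, 1 ≤ k → k < n →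
      V k = p * max (V (k + 1)) (1 - V (k + 1)) + (1 - p) * V (k + 1)) :
    V 1 = (1 - (1 - 2 * p) ^ n) / 2 :=
  adversarial_LSP_constant_parameter_general n hn p hp1 V hVn hV
end

section
/- For each integer n ≥ 2, consider the adversarial Last-Success-Problem with n Bernoulli trials all having parameter p_i = 1/n, and let V_1(n) denote the associated value defined by the backward recurrence. Then V_1(n) = (1 − (1 − 2/n)^n)/2, the sequence n ↦ V_1(n) is strictly decreasing for n ≥ 2, and V_1(n) > 1/2 − 1/(2e²) for every n ≥ 2. -/
/-!
With all parameters equal to `p ≤ 1/2`, every value stays below `1/2`, so the first player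
always takes the contrarian option and `1/2 - V k = (1 - 2p) (1/2 - V (k+1))`; hence
`V 1 = (1 - (1 - 2p)^n)/2`. For `p = 1/n` the claims reduce to the facts that `(1 - 2/n)^n`
increases strictly (strict Bernoulli inequality) and is bounded by `exp (-2)`.
-/

/-- The value `V k` of the adversarial Last-Success-Problem with `n` Bernoulli
trials of parameters `p 1, …, p n`, defined by the backward recurrence
`V n = p n` and `V k = p k * max (V (k+1)) (1 - V (k+1)) + (1 - p k) * V (k+1)`
for `k < n`. -/
noncomputable def advVal (n : ℕ) (p : ℕ → ℝ) : ℕ → ℝ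
  | k =>
    if _h : k < n then
      p k * max (advVal n p (k + 1)) (1 - advVal n p (k + 1))
        + (1 - p k) * advVal n p (k + 1)
    else p n
  termination_by k => n - k
  decreasing_by simp_wf; omega

theorem advVal_self (n : ℕ) (p : ℕ → ℝ) : advVal n p n = p n := by
  rw [advVal, dif_neg (lt_irrefl n)]

theorem advVal_of_lt {n k : ℕ} (p : ℕ → ℝ) (hk : k < n) :
    advVal n p k = p k * max (advVal n p (k + 1)) (1 - advVal n p (k + 1))
      + (1 - p k) * advVal n p (k + 1) := by
  rw [advVal, dif_pos hk]

theorem advVal_const_of_le_half {n k : ℕ} {p : ℝ} (hp : p ≤ 1 / 2) (hk : k ≤ n) :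
    advVal n (fun _ => p) k = (1 - (1 - 2 * p) ^ (n - k + 1)) / 2 := by
  induction hk using Nat.decreasingInduction with
  | self => rw [advVal_self, Nat.sub_self]; ring
  | of_succ k hk ih =>
    rw [advVal_of_lt _ hk, ih, show n - (k + 1) + 1 = n - k by omega]
    have hq : 0 ≤ (1 - 2 * p) ^ (n - k) := pow_nonneg (by linarith) _
    rw [max_eq_right (by linarith)]
    ring

theorem one_add_mul_lt_pow {a : ℝ} (ha : -1 ≤ a) (ha₀ : a ≠ 0) {n : ℕ} (hn : 2 ≤ n) :
    1 + n * a < (1 + a) ^ n := by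
  have h := one_add_mul_self_lt_rpow_one_add ha ha₀ (p := n) (by exact_mod_cast hn)
  rwa [Real.rpow_natCast] at h

theorem one_sub_div_pow_lt_succ {t : ℝ} (ht : 0 < t) {n : ℕ} (htn : t ≤ n) :
    (1 - t / n) ^ n < (1 - t / (n + 1)) ^ (n + 1) := by
  have hn : (0 : ℝ) < n := ht.trans_le htn
  have hn_nat : 0 < n := Nat.cast_pos.mp hn
  rcases htn.eq_or_lt with rfl | htn
  · rw [div_self hn.ne', sub_self, zero_pow (by exact_mod_cast hn.ne')]
    have : 0 < 1 - (n : ℝ) / (n + 1) := by rw [sub_pos, div_lt_one (by linarith)]; linarith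
    positivity
  · have hnt : 0 < (n : ℝ) - t := by linarith
    -- the ratio `(1 - t/(n+1)) / (1 - t/n)` is `1 + a`, and Bernoulli bounds `(1 + a)^(n+1)`
    set a := t / ((n + 1) * (n - t)) with ha
    have ha_pos : 0 < a := by positivity
    have hratio : 1 - t / (n + 1) = (1 + a) * (1 - t / n) := by
      rw [ha]; field_simp; ring
    have hinv : (1 + (n + 1 : ℕ) * a) * (1 - t / n) = 1 := by
      rw [ha]; push_cast; field_simp; ring
    have hbernoulli : 1 + (n + 1 : ℕ) * a < (1 + a) ^ (n + 1) :=
      one_add_mul_lt_pow (by linarith) ha_pos.ne' (by omega)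
    have hpos : 0 < (1 - t / n) ^ (n + 1) := by
      have : 0 < 1 - t / n := by rw [sub_pos, div_lt_one hn]; exact htn
      positivity
    calc (1 - t / n) ^ n = (1 - t / n) ^ n * ((1 + (n + 1 : ℕ) * a) * (1 - t / n)) := by
          rw [hinv, mul_one]
      _ = (1 + (n + 1 : ℕ) * a) * (1 - t / n) ^ (n + 1) := by ring
      _ < (1 + a) ^ (n + 1) * (1 - t / n) ^ (n + 1) := by gcongr
      _ = (1 - t / (n + 1)) ^ (n + 1) := by rw [hratio, mul_pow]

theorem one_sub_div_pow_lt_of_lt {t : ℝ} (ht : 0 < t) {m n : ℕ} (htm : t ≤ m) (hmn : m < n) :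
    (1 - t / m) ^ m < (1 - t / n) ^ n :=
  Nat.rel_of_forall_rel_succ_of_le_of_lt (· < ·) (f := fun k : ℕ => (1 - t / k) ^ k)
    (fun k hk => by
      simpa using one_sub_div_pow_lt_succ ht (htm.trans (by exact_mod_cast hk)))
    le_rfl hmn

theorem one_sub_div_pow_lt_exp_neg {t : ℝ} (ht : 0 < t) {n : ℕ} (htn : t ≤ n) :
    (1 - t / n) ^ n < Real.exp (-t) :=
  calc (1 - t / n) ^ n < (1 - t / (n + 1 : ℕ)) ^ (n + 1) := by
        simpa using one_sub_div_pow_lt_succ ht htn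
    _ ≤ Real.exp (-t) := Real.one_sub_div_pow_le_exp_neg (by push_cast; linarith)

/-- For `n ≥ 2` and parameters all equal to `1/n`, the value of
the adversarial Last-Success-Problem satisfies `V₁(n) = (1 - (1 - 2/n)^n)/2`,
the sequence `n ↦ V₁(n)` is strictly decreasing for `n ≥ 2`, and
`V₁(n) > 1/2 - 1/(2e²)` for every `n ≥ 2`. -/
theorem adversarial_LSP_one_over_n
    (V₁ : ℕ → ℝ) (hV₁ : ∀ n, V₁ n = advVal n (fun _ => 1 / (n : ℝ)) 1) :
    (∀ n : ℕ, 2 ≤ n → V₁ n = (1 - (1 - 2 / (n : ℝ)) ^ n) / 2) ∧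
      (∀ m n : ℕ, 2 ≤ m → m < n → V₁ n < V₁ m) ∧
      (∀ n : ℕ, 2 ≤ n → 1 / 2 - 1 / (2 * Real.exp 2) < V₁ n) := by
  have hform : ∀ n : ℕ, 2 ≤ n → V₁ n = (1 - (1 - 2 / (n : ℝ)) ^ n) / 2 := by
    intro n hn
    have hp : 1 / (n : ℝ) ≤ 1 / 2 := one_div_le_one_div_of_le two_pos (by exact_mod_cast hn)
    rw [hV₁, advVal_const_of_le_half hp (by omega), Nat.sub_add_cancel (by omega), mul_one_div]
  have two_le_cast {n : ℕ} (hn : 2 ≤ n) : (2 : ℝ) ≤ n := by exact_mod_cast hn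
  refine ⟨hform, fun m n hm hmn => ?_, fun n hn => ?_⟩
  · rw [hform m hm, hform n (by omega)]
    linarith [one_sub_div_pow_lt_of_lt two_pos (two_le_cast hm) hmn]
  · have hexp : 1 / (2 * Real.exp 2) = Real.exp (-2) / 2 := by rw [Real.exp_neg]; field_simp
    rw [hform n hn, hexp]
    linarith [one_sub_div_pow_lt_exp_neg two_pos (two_le_cast hn)]
end

section
/- Let n ≥ 1 and let p_1,...,p_n ∈ [0,1] with associated values V_1,...,V_n defined by the backward recurrence. If p_i ≥ 1/n for every i = 1,...,n, then V_1 > 1/2 − 1/(2e²). -/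
/-!
Put `m(p) = max (1 - 2p) 0`. One backward step of the recurrence multiplies the deficit
`1/2 - V` by at most `m(p)`: if `V ≥ 1/2` the next value is `V` itself, and otherwise it is
`1/2 - (1 - 2p)(1/2 - V)`. Starting from `V_n = p_n`, which is the step applied to the value `0`,
this gives `V_1 ≥ 1/2 - (1/2) ∏ m(p_j)`. When every `p_j ≥ 1/n`, each factor is at most
`m(1/n) < exp (-2/n)`, so the product is below `exp (-2)`.
-/

open Finset Real

/-- `1/2 - V_k` shrinks by at least this factor in the step from `k + 1` to `k`. -/
noncomputable def gapFactor (p : ℝ) : ℝ := max (1 - 2 * p) 0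

lemma gapFactor_nonneg (p : ℝ) : 0 ≤ gapFactor p := le_max_right _ _

lemma gapFactor_antitone : Antitone gapFactor :=
  fun _ _ h => max_le_max (by linarith) le_rfl

lemma gapFactor_lt_exp {q : ℝ} (hq : q ≠ 0) : gapFactor q < exp (-2 * q) :=
  max_lt (by linarith [add_one_lt_exp (by simpa using hq : -2 * q ≠ 0)]) (exp_pos _)

lemma gapFactor_inv_pow_lt_exp_neg_two {n : ℕ} (hn : n ≠ 0) :
    gapFactor (1 / n) ^ n < exp (-2) := by
  have hn' : (n : ℝ) ≠ 0 := Nat.cast_ne_zero.mpr hn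
  calc gapFactor (1 / n) ^ n < exp (-2 * (1 / n)) ^ n :=
        pow_lt_pow_left₀ (gapFactor_lt_exp (by positivity)) (gapFactor_nonneg _) hn
    _ = exp (-2) := by rw [← exp_nat_mul]; field_simp

lemma half_sub_gap_le_step {p x P : ℝ} (hP : 0 ≤ P) (hx : 1 / 2 - P / 2 ≤ x) :
    1 / 2 - gapFactor p * P / 2 ≤ p * max x (1 - x) + (1 - p) * x := by
  have hmP : 0 ≤ gapFactor p * P := mul_nonneg (gapFactor_nonneg p) hP
  rcases le_total x (1 - x) with hlow | hhigh
  · rw [max_eq_right hlow]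
    have hdef : 0 ≤ 1 / 2 - x := by linarith
    have hmul : (1 - 2 * p) * (1 / 2 - x) ≤ gapFactor p * (P / 2) :=
      mul_le_mul (le_max_left _ _) (by linarith) hdef (gapFactor_nonneg p)
    linarith
  · rw [max_eq_left hhigh]
    linarith

lemma half_sub_prod_gapFactor_le (n : ℕ) (p V : ℕ → ℝ) (hVn : V n = p n)
    (hV : ∀ k, 1 ≤ k → k < n →
      V k = p k * max (V (k + 1)) (1 - V (k + 1)) + (1 - p k) * V (k + 1))
    {k : ℕ} (hk : 1 ≤ k) (hkn : k ≤ n) :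
    1 / 2 - (∏ j ∈ Icc k n, gapFactor (p j)) / 2 ≤ V k := by
  refine Nat.decreasingInduction' (fun j hjn hkj ih => ?_) hkn ?_
  · rw [← insert_Icc_add_one_left_eq_Icc hjn.le, prod_insert (by simp),
      hV j (hk.trans hkj) hjn]
    exact half_sub_gap_le_step (prod_nonneg fun i _ => gapFactor_nonneg _) ih
  · have hVn' : V n = p n * max 0 (1 - 0) + (1 - p n) * 0 := by simp [hVn]
    simpa [hVn'] using half_sub_gap_le_step (p := p n) zero_le_one (x := 0) (by norm_num)

theorem adversarial_LSP_lower_bound_general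
    (n : ℕ) (hn : 1 ≤ n) (p V : ℕ → ℝ)
    (hVn : V n = p n)
    (hV : ∀ k, 1 ≤ k → k < n →
      V k = p k * max (V (k + 1)) (1 - V (k + 1)) + (1 - p k) * V (k + 1))
    (hbig : ∀ k, 1 ≤ k → k ≤ n → 1 / (n : ℝ) ≤ p k) :
    1 / 2 - 1 / (2 * Real.exp 2) < V 1 := by
  have hprod : ∏ j ∈ Icc 1 n, gapFactor (p j) ≤ gapFactor (1 / n) ^ n := by
    calc ∏ j ∈ Icc 1 n, gapFactor (p j) ≤ ∏ _j ∈ Icc 1 n, gapFactor (1 / n) :=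
          prod_le_prod (fun j _ => gapFactor_nonneg _)
            fun j hj => gapFactor_antitone (hbig j (mem_Icc.mp hj).1 (mem_Icc.mp hj).2)
      _ = gapFactor (1 / n) ^ n := by simp
  have hlt := gapFactor_inv_pow_lt_exp_neg_two (n := n) (by omega)
  have hV1 := half_sub_prod_gapFactor_le n p V hVn hV le_rfl hn
  have hexp : 1 / (2 * exp 2) = exp (-2) / 2 := by rw [exp_neg]; field_simp
  rw [hexp]
  linarith

/-- If `p i ≥ 1/n` for every `i = 1, …, n`, then
`V 1 > 1/2 - 1/(2e²)`. -/
theorem adversarial_LSP_lower_bound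
    (n : ℕ) (hn : 1 ≤ n) (p V : ℕ → ℝ)
    (hp : ∀ k, 1 ≤ k → k ≤ n → p k ∈ Set.Icc (0 : ℝ) 1)
    (hVn : V n = p n)
    (hV : ∀ k, 1 ≤ k → k < n →
      V k = p k * max (V (k + 1)) (1 - V (k + 1)) + (1 - p k) * V (k + 1))
    (hbig : ∀ k, 1 ≤ k → k ≤ n → 1 / (n : ℝ) ≤ p k) :
    1 / 2 - 1 / (2 * Real.exp 2) < V 1 :=
  adversarial_LSP_lower_bound_general n hn p V hVn hV hbig
end

section
/- Let n ≥ 1 and let p_1,...,p_n ∈ [0,1] satisfy p_i < 1/2 for every i, with associated values V_1,...,V_n defined by the backward recurrence. Fix an index k and let p̄_1,...,p̄_n be parameters with p̄_i = p_i for i ≠ k and p_k < p̄_k ≤ 1, with associated values V̄_1,...,V̄_n defined by the same backward recurrence. Then V̄_i = V_i for every i > k and V̄_i > V_i for every i ≤ k; that is, increasing one parameter strictly increases the value at every earlier stage. -/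
/-!
The stage map `v ↦ q · max v (1 - v) + (1 - q) · v` is `v` for `v ≥ 1/2` and `q + (1 - 2q) v`
for `v ≤ 1/2`. So for `q < 1/2` it is strictly increasing in `v` and keeps values below `1/2`,
and below `1/2` it is strictly increasing in `q`. Hence all values stay below `1/2`, raising
`p k` raises `V k`, and that increase propagates backwards through the stage maps.
-/

/-- One stage of the backward recurrence, `V i = lastSuccessStep (p i) (V (i + 1))`. -/
def lastSuccessStep (q v : ℝ) : ℝ := q * max v (1 - v) + (1 - q) * v

lemma lastSuccessStep_of_le_half {q v : ℝ} (hv : v ≤ 1 / 2) :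
    lastSuccessStep q v = q + (1 - 2 * q) * v := by
  rw [lastSuccessStep, max_eq_right (by linarith)]
  ring

lemma lastSuccessStep_lt_half {q v : ℝ} (hq : q < 1 / 2) (hv : v < 1 / 2) :
    lastSuccessStep q v < 1 / 2 := by
  rw [lastSuccessStep_of_le_half hv.le]
  nlinarith

lemma lastSuccessStep_strictMono {q : ℝ} (hq : q < 1 / 2) : StrictMono (lastSuccessStep q) := by
  intro v w hvw
  simp only [lastSuccessStep]
  rcases max_cases v (1 - v) with ⟨hv, _⟩ | ⟨hv, _⟩ <;>
    rcases max_cases w (1 - w) with ⟨hw, _⟩ | ⟨hw, _⟩ <;>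
    rw [hv, hw] <;> nlinarith

lemma lastSuccessStep_strictMono_left {v : ℝ} (hv : v < 1 / 2) :
    StrictMono fun q => lastSuccessStep q v := by
  intro q q' hq
  simp only [lastSuccessStep_of_le_half hv.le]
  nlinarith

section BackwardRecurrence

variable {m n i : ℕ}

theorem eq_of_backward_recurrence {α : Type*} {f : ℕ → α → α} {V W : ℕ → α}
    (hV : ∀ j, m ≤ j → j < n → V j = f j (V (j + 1)))
    (hW : ∀ j, m ≤ j → j < n → W j = f j (W (j + 1)))
    (hVWn : V n = W n) (hmi : m ≤ i) (hin : i ≤ n) : V i = W i := by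
  refine Nat.decreasingInduction' (P := fun j => V j = W j) (fun j hjn hij ih => ?_) hin hVWn
  rw [hV j (hmi.trans hij) hjn, hW j (hmi.trans hij) hjn, ih]

theorem lt_of_backward_recurrence {α : Type*} [Preorder α] {f : ℕ → α → α} {V W : ℕ → α}
    (hf : ∀ j, m ≤ j → j < n → StrictMono (f j))
    (hV : ∀ j, m ≤ j → j < n → V j = f j (V (j + 1)))
    (hW : ∀ j, m ≤ j → j < n → W j = f j (W (j + 1)))
    (hVWn : V n < W n) (hmi : m ≤ i) (hin : i ≤ n) : V i < W i := by
  refine Nat.decreasingInduction' (P := fun j => V j < W j) (fun j hjn hij ih => ?_) hin hVWn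
  rw [hV j (hmi.trans hij) hjn, hW j (hmi.trans hij) hjn]
  exact hf j (hmi.trans hij) hjn ih

end BackwardRecurrence

theorem lastSuccessValue_lt_half {n i : ℕ} {p V : ℕ → ℝ}
    (hp : ∀ j, 1 ≤ j → j ≤ n → p j < 1 / 2) (hVn : V n = p n)
    (hV : ∀ j, 1 ≤ j → j < n → V j = lastSuccessStep (p j) (V (j + 1)))
    (h1i : 1 ≤ i) (hin : i ≤ n) : V i < 1 / 2 := by
  refine Nat.decreasingInduction' (P := fun j => V j < 1 / 2) (fun j hjn hij ih => ?_) hin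
    (hVn ▸ hp n (h1i.trans hin) le_rfl)
  rw [hV j (h1i.trans hij) hjn]
  exact lastSuccessStep_lt_half (hp j (h1i.trans hij) hjn.le) ih

theorem adversarial_LSP_monotone_in_parameter_general
    (n : ℕ) (p pbar V Vbar : ℕ → ℝ)
    (hp : ∀ i, 1 ≤ i → i ≤ n → 0 ≤ p i ∧ p i < 1 / 2)
    (hVn : V n = p n)
    (hV : ∀ i, 1 ≤ i → i < n →
      V i = p i * max (V (i + 1)) (1 - V (i + 1)) + (1 - p i) * V (i + 1))
    (k : ℕ) (hk1 : 1 ≤ k) (hkn : k ≤ n)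
    (hagree : ∀ i, i ≠ k → pbar i = p i)
    (hinc : p k < pbar k)
    (hVbarn : Vbar n = pbar n)
    (hVbar : ∀ i, 1 ≤ i → i < n →
      Vbar i = pbar i * max (Vbar (i + 1)) (1 - Vbar (i + 1))
        + (1 - pbar i) * Vbar (i + 1)) :
    (∀ i, k < i → i ≤ n → Vbar i = V i) ∧
      (∀ i, 1 ≤ i → i ≤ k → V i < Vbar i) := by
  have hp_half : ∀ i, 1 ≤ i → i ≤ n → p i < 1 / 2 := fun i h1 hi => (hp i h1 hi).2
  have hVbar' : ∀ i, 1 ≤ i → i < n → i ≠ k →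
      Vbar i = lastSuccessStep (p i) (Vbar (i + 1)) := fun i h1 hi hik => by
    rw [← hagree i hik]; exact hVbar i h1 hi
  have hlater : ∀ i, k < i → i ≤ n → Vbar i = V i := fun i hki hin =>
    eq_of_backward_recurrence (m := k + 1)
      (fun j hj hjn => hVbar' j (by omega) hjn (by omega))
      (fun j hj hjn => hV j (by omega) hjn)
      (by rw [hVbarn, hVn, hagree n (by omega)]) hki hin
  have hVk : V k < Vbar k := by
    rcases hkn.lt_or_eq with hkn | rfl
    · rw [hV k hk1 hkn, hVbar k hk1 hkn, hlater (k + 1) k.lt_succ_self hkn]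
      exact lastSuccessStep_strictMono_left
        (lastSuccessValue_lt_half hp_half hVn hV (by omega) hkn) hinc
    · rw [hVn, hVbarn]; exact hinc
  refine ⟨hlater, fun i h1i hik => ?_⟩
  exact lt_of_backward_recurrence (n := k)
    (fun j hj hjk => lastSuccessStep_strictMono (hp_half j hj (by omega)))
    (fun j hj hjk => hV j hj (by omega))
    (fun j hj hjk => hVbar' j hj (by omega) hjk.ne) hVk h1i hik

/-- **Lemma on increasing one parameter.** Suppose `p i < 1/2` for
all `i ∈ [1,n]`, and `p̄` agrees with `p` except at index `k ∈ [1,n]`, where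
`p k < p̄ k ≤ 1`. If `V` and `V̄` denote the values of the two games (same backward
recurrence), then `V̄ i = V i` for every `k < i ≤ n` and `V̄ i > V i` for every
`1 ≤ i ≤ k`. -/
theorem adversarial_LSP_monotone_in_parameter
    (n : ℕ) (hn : 1 ≤ n) (p pbar V Vbar : ℕ → ℝ)
    (hp : ∀ i, 1 ≤ i → i ≤ n → 0 ≤ p i ∧ p i < 1 / 2)
    (hVn : V n = p n)
    (hV : ∀ i, 1 ≤ i → i < n →
      V i = p i * max (V (i + 1)) (1 - V (i + 1)) + (1 - p i) * V (i + 1))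
    (k : ℕ) (hk1 : 1 ≤ k) (hkn : k ≤ n)
    (hagree : ∀ i, i ≠ k → pbar i = p i)
    (hinc : p k < pbar k) (hle : pbar k ≤ 1)
    (hVbarn : Vbar n = pbar n)
    (hVbar : ∀ i, 1 ≤ i → i < n →
      Vbar i = pbar i * max (Vbar (i + 1)) (1 - Vbar (i + 1))
        + (1 - pbar i) * Vbar (i + 1)) :
    (∀ i, k < i → i ≤ n → Vbar i = V i) ∧
      (∀ i, 1 ≤ i → i ≤ k → V i < Vbar i) :=
  adversarial_LSP_monotone_in_parameter_general n p pbar V Vbar hp hVn hV k hk1 hkn hagree hinc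
    hVbarn hVbar
end

section
/- For every integer n ≥ 1, the identity (2^n − 1)/2^{2n+1} + ∑_{k=1}^{n} ((1 + 2^{−k})/2) · 2^{−k} = 2 (1 − 4^{−n}) / 3 holds; consequently, when the n trial parameters are independent draws from the uniform distribution U[0,1], player A's expected winning probability in the adversarial Last-Success-Problem equals 2(1 − 4^{−n})/3. -/
/-! Each summand is `2⁻¹ · 2⁻ᵏ + 2⁻¹ · 4⁻ᵏ`, so the sum is half the sum of two finite geometric
series with ratios `1/2` and `1/4`; the identity is then a rational-function identity in `2ⁿ`. -/

open Finset

theorem mul_sum_Icc_one_pow {R : Type*} [CommRing R] (r : R) (n : ℕ) :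
    (1 - r) * ∑ k ∈ Icc 1 n, r ^ k = r * (1 - r ^ n) := by
  induction n with
  | zero => simp
  | succ n ih =>
    rw [sum_Icc_succ_top (by omega), mul_add, ih]
    ring

theorem sum_Icc_one_pow_eq {K : Type*} [Field K] {r : K} (hr : r ≠ 1) (n : ℕ) :
    ∑ k ∈ Icc 1 n, r ^ k = r * (1 - r ^ n) / (1 - r) := by
  rw [eq_div_iff (sub_ne_zero.mpr hr.symm), mul_comm, mul_sum_Icc_one_pow]

theorem adversarial_LSP_uniform_expected_value_general (n : ℕ) :
    ((2 : ℝ) ^ n - 1) / 2 ^ (2 * n + 1) +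
      ∑ k ∈ Finset.Icc 1 n, ((1 + ((2 : ℝ) ^ k)⁻¹) / 2) * ((2 : ℝ) ^ k)⁻¹ =
      2 * (1 - ((4 : ℝ) ^ n)⁻¹) / 3 := by
  have summand (k : ℕ) : ((1 + ((2 : ℝ) ^ k)⁻¹) / 2) * ((2 : ℝ) ^ k)⁻¹ =
      2⁻¹ * (2⁻¹ : ℝ) ^ k + 2⁻¹ * (4⁻¹ : ℝ) ^ k := by
    rw [show (4 : ℝ)⁻¹ = 2⁻¹ ^ 2 by norm_num, ← pow_mul, mul_comm 2 k, pow_mul, inv_pow]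
    ring
  have pow_four : (4 : ℝ) ^ n = (2 ^ n) ^ 2 := by
    rw [← pow_mul, mul_comm, pow_mul]; norm_num
  have pow_odd : (2 : ℝ) ^ (2 * n + 1) = 2 * (2 ^ n) ^ 2 := by
    rw [pow_succ, pow_mul']; ring
  simp only [summand, sum_add_distrib, ← mul_sum]
  rw [sum_Icc_one_pow_eq (by norm_num), sum_Icc_one_pow_eq (by norm_num), inv_pow, inv_pow,
    pow_four, pow_odd]
  field_simp
  ring

/-- For every integer `n ≥ 1`,
`(2^n - 1)/2^(2n+1) + ∑_{k=1}^{n} ((1 + 2⁻ᵏ)/2) · 2⁻ᵏ = 2 (1 - 4⁻ⁿ)/3`;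
this is player A's expected winning probability in the adversarial
Last-Success-Problem when the `n` parameters are independent draws from
`U[0,1]`. -/
theorem adversarial_LSP_uniform_expected_value (n : ℕ) (hn : 1 ≤ n) :
    ((2 : ℝ) ^ n - 1) / 2 ^ (2 * n + 1) +
      ∑ k ∈ Finset.Icc 1 n, ((1 + ((2 : ℝ) ^ k)⁻¹) / 2) * ((2 : ℝ) ^ k)⁻¹ =
      2 * (1 - ((4 : ℝ) ^ n)⁻¹) / 3 :=
  adversarial_LSP_uniform_expected_value_general n
end
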